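/- arXiv:2402.05082 — 3 statements merged into one kernel-verified Lean document; each statement's English description precedes it below -/
import Mathlib

section
/- The Gaussian measure γ is doubling on the family of admissible balls: there is a constant D > 0 such that γ(2B) ≤ D γ(B) for every Euclidean ball B = B(c_B, r_B) with r_B ≤ m(|c_B|), where m(s)=1 for 0 ≤ s ≤ 1 and m(s)=1/s for s > 1. -/
open MeasureTheory

/-- The `n`-dimensional Gaussian measure `dγ(x) = π^{-n/2} e^{-|x|²} dx`. -/
noncomputable def gaussianMeasure (n : ℕ) : Measure (EuclideanSpace ℝ (Fin n)) :=
  volume.withDensity fun x =>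
    ENNReal.ofReal (Real.pi ^ (-(n : ℝ) / 2) * Real.exp (-‖x‖ ^ 2))

/-- A ball `B(c, r)` is admissible if `r ≤ m(|c|)`, where `m(s) = 1` for `s ≤ 1`
and `m(s) = 1/s` for `s > 1`. -/
def IsAdmissible {n : ℕ} (c : EuclideanSpace ℝ (Fin n)) (r : ℝ) : Prop :=
  0 < r ∧ r ≤ (if ‖c‖ ≤ 1 then 1 else ‖c‖⁻¹)

/-- The Gaussian measure is doubling on the family of admissible
balls: there is `D > 0`, depending only on the dimension, with
`γ(2B) ≤ D γ(B)` for every admissible ball `B`. -/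
theorem gaussian_doubling_admissible (n : ℕ) :
    ∃ D : ℝ, 0 < D ∧ ∀ (c : EuclideanSpace ℝ (Fin n)) (r : ℝ), IsAdmissible c r →
      gaussianMeasure n (Metric.ball c (2 * r))
        ≤ ENNReal.ofReal D * gaussianMeasure n (Metric.ball c r) := by
  refine ⟨2 ^ n * Real.exp 16, by positivity, ?_⟩
  rintro c r ⟨hr, hradm⟩
  have hr1 : r ≤ 1 := by
    by_cases h : ‖c‖ ≤ 1
    · simpa [h] using hradm
    · rw [if_neg h] at hradm
      exact hradm.trans (inv_le_one_of_one_le₀ (le_of_not_ge h))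
  have hrc : r * ‖c‖ ≤ 1 := by
    by_cases h : ‖c‖ ≤ 1
    · calc r * ‖c‖ ≤ 1 * 1 := by
            apply mul_le_mul hr1 h (norm_nonneg c) zero_le_one
        _ = 1 := by ring
    · rw [if_neg h] at hradm
      have hc : 0 < ‖c‖ := lt_trans one_pos (lt_of_not_ge h)
      calc r * ‖c‖ ≤ ‖c‖⁻¹ * ‖c‖ := by
            apply mul_le_mul_of_nonneg_right hradm (norm_nonneg c)
        _ = 1 := inv_mul_cancel₀ hc.ne'
  -- key pointwise estimate on `2B`
  have key : ∀ x : EuclideanSpace ℝ (Fin n), dist x c < 2 * r →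
      |‖x‖ ^ 2 - ‖c‖ ^ 2| ≤ 8 := by
    intro x hx
    have h1 : |‖x‖ - ‖c‖| ≤ 2 * r := by
      calc |‖x‖ - ‖c‖| ≤ ‖x - c‖ := abs_norm_sub_norm_le x c
        _ = dist x c := (dist_eq_norm x c).symm
        _ ≤ 2 * r := hx.le
    rw [abs_le] at h1 ⊢
    constructor <;> nlinarith [norm_nonneg x, norm_nonneg c, h1.1, h1.2, hr.le, hr1, hrc]
  set A := Real.pi ^ (-(n : ℝ) / 2) with hA
  have hApos : 0 < A := Real.rpow_pos_of_pos Real.pi_pos _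
  set K := A * Real.exp (-‖c‖ ^ 2) with hK
  have hKpos : 0 < K := by positivity
  have hmeas2 : MeasurableSet (Metric.ball c (2 * r)) := measurableSet_ball
  have hmeas1 : MeasurableSet (Metric.ball c r) := measurableSet_ball
  have hub : gaussianMeasure n (Metric.ball c (2 * r))
      ≤ ENNReal.ofReal (K * Real.exp 8) * volume (Metric.ball c (2 * r)) := by
    rw [gaussianMeasure, withDensity_apply _ hmeas2]
    calc ∫⁻ x in Metric.ball c (2 * r), ENNReal.ofReal (A * Real.exp (-‖x‖ ^ 2))
        ≤ ∫⁻ _x in Metric.ball c (2 * r), ENNReal.ofReal (K * Real.exp 8) := by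
          apply setLIntegral_mono' hmeas2
          intro x hx
          apply ENNReal.ofReal_le_ofReal
          rw [hK, mul_assoc, ← Real.exp_add]
          apply mul_le_mul_of_nonneg_left _ hApos.le
          apply Real.exp_le_exp.2
          have := key x (by simpa [Metric.mem_ball] using hx)
          rw [abs_le] at this
          linarith [this.1]
      _ = ENNReal.ofReal (K * Real.exp 8) * volume (Metric.ball c (2 * r)) :=
          setLIntegral_const _ _
  have hlb : ENNReal.ofReal (K * Real.exp (-8)) * volume (Metric.ball c r)
      ≤ gaussianMeasure n (Metric.ball c r) := by
    rw [gaussianMeasure, withDensity_apply _ hmeas1]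
    calc ENNReal.ofReal (K * Real.exp (-8)) * volume (Metric.ball c r)
        = ∫⁻ _x in Metric.ball c r, ENNReal.ofReal (K * Real.exp (-8)) :=
          (setLIntegral_const _ _).symm
      _ ≤ ∫⁻ x in Metric.ball c r, ENNReal.ofReal (A * Real.exp (-‖x‖ ^ 2)) := by
          apply setLIntegral_mono' hmeas1
          intro x hx
          apply ENNReal.ofReal_le_ofReal
          rw [hK, mul_assoc, ← Real.exp_add]
          apply mul_le_mul_of_nonneg_left _ hApos.le
          apply Real.exp_le_exp.2
          have hx2 : dist x c < 2 * r := by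
            have := Metric.mem_ball.1 hx
            linarith
          have := key x hx2
          rw [abs_le] at this
          linarith [this.2]
  have hvol : volume (Metric.ball c (2 * r))
      = ENNReal.ofReal ((2 : ℝ) ^ n) * volume (Metric.ball c r) := by
    rw [Measure.addHaar_ball_of_pos _ _ hr, Measure.addHaar_ball_of_pos _ _ (by linarith : (0:ℝ) < 2 * r),
      finrank_euclideanSpace_fin, mul_pow, ENNReal.ofReal_mul (by positivity), mul_assoc]
  have hexp : (2 : ℝ) ^ n * Real.exp 16 * (K * Real.exp (-8)) = K * Real.exp 8 * 2 ^ n := by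
    have h16 : Real.exp 16 * Real.exp (-8) = Real.exp 8 := by
      rw [← Real.exp_add]; norm_num
    linear_combination (2:ℝ) ^ n * K * h16
  calc gaussianMeasure n (Metric.ball c (2 * r))
      ≤ ENNReal.ofReal (K * Real.exp 8) * volume (Metric.ball c (2 * r)) := hub
    _ = ENNReal.ofReal (K * Real.exp 8 * 2 ^ n) * volume (Metric.ball c r) := by
        rw [hvol, ← mul_assoc, ← ENNReal.ofReal_mul (by positivity)]
    _ = ENNReal.ofReal (2 ^ n * Real.exp 16) *
          (ENNReal.ofReal (K * Real.exp (-8)) * volume (Metric.ball c r)) := by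
        rw [← mul_assoc, ← ENNReal.ofReal_mul (by positivity), hexp]
    _ ≤ ENNReal.ofReal (2 ^ n * Real.exp 16) * gaussianMeasure n (Metric.ball c r) := by
        exact mul_le_mul_right hlb _
end

section
/- With F_α as above, there is a constant C (depending on α and n) such that |∇_y F_α(x,y,r)| ≤ C e^{-|x-ry|²/(2(1-r²))} / √(1-r²) for all x, y ∈ ℝ^n and r ∈ (0,1). -/
/-!
With `s = √(1 - r²)`, the function of `z` is `G (s⁻¹ • (x - r • z))` for the Hermite function
`G u = H_α(u) e^{-|u|²} = ∏ᵢ g_{αᵢ}(uᵢ)`, `g_k(t) = H_k(t) e^{-t²}`, so its gradient is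
`-(r / s) ∇G`. The recursion `H_{k+1} = 2 t H_k - H_k'` says exactly `g_k' = -g_{k+1}`, and
each `g_k` is bounded by `C e^{-t²/2}` because a polynomial is dominated by `e^{t²/2}`.
The product rule then bounds `|∇G(u)|` by `C e^{-|u|²/2}`, and `|u|² = |x - r y|² / (1 - r²)`.
-/

/-- One-dimensional physicists' Hermite polynomials:
`H_0 = 1`, `H_{k+1}(t) = 2 t H_k(t) - H_k'(t)`. -/
noncomputable def hermiteP : ℕ → ℝ → ℝ
  | 0 => fun _ => 1
  | (k + 1) => fun t => 2 * t * hermiteP k t - deriv (hermiteP k) t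

/-- `n`-dimensional Hermite polynomial `H_α(u) = ∏ᵢ H_{αᵢ}(uᵢ)`. -/
noncomputable def HermiteN {n : ℕ} (α : Fin n → ℕ) (u : EuclideanSpace ℝ (Fin n)) : ℝ :=
  ∏ i, hermiteP (α i) (u i)

open Polynomial Finset

lemma exists_hermiteP_eq_eval (k : ℕ) : ∃ p : ℝ[X], hermiteP k = fun t => p.eval t := by
  induction k with
  | zero => exact ⟨1, funext fun t => by simp [hermiteP]⟩
  | succ k ih =>
    obtain ⟨p, hp⟩ := ih
    refine ⟨2 * X * p - derivative p, funext fun t => ?_⟩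
    simp [hermiteP, hp, Polynomial.deriv]

lemma abs_pow_le_factorial_mul_exp_sq (t : ℝ) (i : ℕ) :
    |t| ^ i ≤ i.factorial * Real.exp (1 / 2) * Real.exp (t ^ 2 / 2) := by
  have hpow : |t| ^ i ≤ i.factorial * Real.exp |t| := by
    have := Real.pow_div_factorial_le_exp (x := |t|) (abs_nonneg t) i
    rwa [div_le_iff₀ (by positivity), mul_comm] at this
  have hexp : Real.exp |t| ≤ Real.exp (1 / 2) * Real.exp (t ^ 2 / 2) := by
    rw [← Real.exp_add, Real.exp_le_exp]
    nlinarith [sq_nonneg (|t| - 1), sq_abs t]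
  calc |t| ^ i ≤ i.factorial * Real.exp |t| := hpow
    _ ≤ i.factorial * (Real.exp (1 / 2) * Real.exp (t ^ 2 / 2)) := by gcongr
    _ = _ := by ring

lemma Polynomial.exists_abs_eval_le_mul_exp_sq (p : ℝ[X]) :
    ∃ C, ∀ t, |p.eval t| ≤ C * Real.exp (t ^ 2 / 2) := by
  refine ⟨∑ i ∈ range (p.natDegree + 1), |p.coeff i| * (i.factorial * Real.exp (1 / 2)),
    fun t => ?_⟩
  rw [eval_eq_sum_range, sum_mul]
  refine (abs_sum_le_sum_abs _ _).trans (sum_le_sum fun i _ => ?_)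
  rw [abs_mul, abs_pow, mul_assoc]
  gcongr
  exact abs_pow_le_factorial_mul_exp_sq t i

noncomputable def hermiteGauss (k : ℕ) (t : ℝ) : ℝ := hermiteP k t * Real.exp (-t ^ 2)

lemma hasDerivAt_hermiteGauss (k : ℕ) (t : ℝ) :
    HasDerivAt (hermiteGauss k) (-hermiteGauss (k + 1) t) t := by
  obtain ⟨p, hp⟩ := exists_hermiteP_eq_eval k
  have hgauss : HasDerivAt (fun s : ℝ => Real.exp (-s ^ 2)) (-(2 * t) * Real.exp (-t ^ 2)) t := by
    simpa [mul_comm] using ((hasDerivAt_pow 2 t).neg).exp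
  have hfun : hermiteGauss k = fun s => p.eval s * Real.exp (-s ^ 2) := by
    funext s; simp [hermiteGauss, hp]
  have hsucc : hermiteGauss (k + 1) t =
      (2 * t * p.eval t - (derivative p).eval t) * Real.exp (-t ^ 2) := by
    simp [hermiteGauss, hermiteP, hp, Polynomial.deriv]
  rw [hfun, hsucc]
  exact ((p.hasDerivAt t).mul hgauss).congr_deriv (by ring)

lemma exists_abs_hermiteGauss_le (k : ℕ) :
    ∃ C, ∀ t, |hermiteGauss k t| ≤ C * Real.exp (-t ^ 2 / 2) := by
  obtain ⟨p, hp⟩ := exists_hermiteP_eq_eval k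
  obtain ⟨C, hC⟩ := p.exists_abs_eval_le_mul_exp_sq
  refine ⟨C, fun t => ?_⟩
  have hsplit : Real.exp (-t ^ 2 / 2) = Real.exp (t ^ 2 / 2) * Real.exp (-t ^ 2) := by
    rw [← Real.exp_add]; ring_nf
  rw [hermiteGauss, hp, abs_mul, abs_of_pos (Real.exp_pos _), hsplit, ← mul_assoc]
  gcongr
  exact hC t

section ProductOfCoordinates

variable {ι : Type*} [Fintype ι]

lemma norm_sum_smul_proj_le (c : ι → ℝ) :
    ‖∑ i, c i • EuclideanSpace.proj (𝕜 := ℝ) i‖ ≤ ∑ i, |c i| := by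
  have hproj : ∀ i, ‖EuclideanSpace.proj (𝕜 := ℝ) (ι := ι) i‖ ≤ 1 := fun i =>
    ContinuousLinearMap.opNorm_le_bound _ zero_le_one fun z => by
      simpa using PiLp.norm_apply_le z i
  refine (norm_sum_le _ _).trans (sum_le_sum fun i _ => ?_)
  rw [norm_smul, Real.norm_eq_abs]
  exact mul_le_of_le_one_right (abs_nonneg _) (hproj i)

variable [DecidableEq ι]

lemma hasFDerivAt_prod_apply {f : ι → ℝ → ℝ} {f' : ι → ℝ} {u : EuclideanSpace ℝ ι}
    (hf : ∀ i, HasDerivAt (f i) (f' i) (u i)) :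
    HasFDerivAt (fun z : EuclideanSpace ℝ ι => ∏ i, f i (z i))
      (∑ i, ((∏ j ∈ univ.erase i, f j (u j)) * f' i) • EuclideanSpace.proj (𝕜 := ℝ) i) u := by
  have hcoord : ∀ i ∈ univ, HasFDerivAt (fun z : EuclideanSpace ℝ ι => f i (z i))
      (f' i • EuclideanSpace.proj (𝕜 := ℝ) i) u :=
    fun i _ => (hf i).comp_hasFDerivAt u (EuclideanSpace.proj (𝕜 := ℝ) i).hasFDerivAt
  simpa only [smul_smul] using HasFDerivAt.finsetProd hcoord

lemma norm_fderiv_prod_apply_le {f : ι → ℝ → ℝ} {f' A B φ : ι → ℝ} {u : EuclideanSpace ℝ ι}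
    (hf : ∀ i, HasDerivAt (f i) (f' i) (u i)) (hA : ∀ i, |f i (u i)| ≤ A i * φ i)
    (hB : ∀ i, |f' i| ≤ B i * φ i) :
    ‖fderiv ℝ (fun z : EuclideanSpace ℝ ι => ∏ i, f i (z i)) u‖ ≤
      (∑ i, (∏ j ∈ univ.erase i, A j) * B i) * ∏ i, φ i := by
  rw [(hasFDerivAt_prod_apply hf).fderiv, sum_mul]
  refine (norm_sum_smul_proj_le _).trans (sum_le_sum fun i _ => ?_)
  have hφ : ∀ j, 0 ≤ A j * φ j := fun j => (abs_nonneg _).trans (hA j)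
  calc |(∏ j ∈ univ.erase i, f j (u j)) * f' i|
      ≤ (∏ j ∈ univ.erase i, A j * φ j) * (B i * φ i) := by
        rw [abs_mul, abs_prod]
        exact mul_le_mul (prod_le_prod (fun j _ => abs_nonneg _) fun j _ => hA j) (hB i)
          (abs_nonneg _) (prod_nonneg fun j _ => hφ j)
    _ = (∏ j ∈ univ.erase i, A j) * B i * ∏ j, φ j := by
        rw [← prod_erase_mul univ φ (mem_univ i), prod_mul_distrib]
        ring

end ProductOfCoordinates

lemma norm_gradient_comp_smul_sub {E : Type*} [NormedAddCommGroup E] [InnerProductSpace ℝ E]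
    [CompleteSpace E] {G : E → ℝ} {c r : ℝ} {x y : E}
    (hG : DifferentiableAt ℝ G (c • (x - r • y))) :
    ‖gradient (fun z => G (c • (x - r • z))) y‖ = |c * r| * ‖fderiv ℝ G (c • (x - r • y))‖ := by
  have haff : HasFDerivAt (fun z : E => c • (x - r • z))
      (-(c * r) • ContinuousLinearMap.id ℝ E) y := by
    refine (((hasFDerivAt_id y).const_smul r).const_sub x).const_smul c |>.congr_fderiv ?_
    rw [smul_neg, smul_smul, neg_smul]
  have hcomp : HasFDerivAt (fun z => G (c • (x - r • z)))
      ((fderiv ℝ G (c • (x - r • y))).comp (-(c * r) • ContinuousLinearMap.id ℝ E)) y :=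
    hG.hasFDerivAt.comp y haff
  rw [← (InnerProductSpace.toDual ℝ E).norm_map, toDual_gradient, hcomp.fderiv,
    ContinuousLinearMap.comp_smul, ContinuousLinearMap.comp_id, norm_smul, norm_neg,
    Real.norm_eq_abs]

noncomputable def hermiteGaussN {n : ℕ} (α : Fin n → ℕ) (u : EuclideanSpace ℝ (Fin n)) : ℝ :=
  HermiteN α u * Real.exp (-‖u‖ ^ 2)

lemma hermiteGaussN_eq_prod {n : ℕ} (α : Fin n → ℕ) :
    hermiteGaussN α = fun u => ∏ i, hermiteGauss (α i) (u i) := by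
  funext u
  rw [hermiteGaussN, HermiteN, EuclideanSpace.real_norm_sq_eq, ← sum_neg_distrib, Real.exp_sum,
    ← prod_mul_distrib]
  rfl

lemma differentiable_hermiteGaussN {n : ℕ} (α : Fin n → ℕ) :
    Differentiable ℝ (hermiteGaussN α) := fun u => by
  rw [hermiteGaussN_eq_prod]
  exact (hasFDerivAt_prod_apply fun i => hasDerivAt_hermiteGauss (α i) (u i)).differentiableAt

lemma exists_norm_fderiv_hermiteGaussN_le {n : ℕ} (α : Fin n → ℕ) :
    ∃ C, ∀ u, ‖fderiv ℝ (hermiteGaussN α) u‖ ≤ C * Real.exp (-‖u‖ ^ 2 / 2) := by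
  choose A hA using exists_abs_hermiteGauss_le
  refine ⟨∑ i, (∏ j ∈ univ.erase i, A (α j)) * A (α i + 1), fun u => ?_⟩
  have hgauss : ∏ i, Real.exp (-u i ^ 2 / 2) = Real.exp (-‖u‖ ^ 2 / 2) := by
    rw [← Real.exp_sum, EuclideanSpace.real_norm_sq_eq, ← sum_neg_distrib, sum_div]
  rw [hermiteGaussN_eq_prod, ← hgauss]
  refine norm_fderiv_prod_apply_le (fun i => hasDerivAt_hermiteGauss _ _) (fun i => hA _ _)
    fun i => ?_
  rw [abs_neg]
  exact hA _ _

lemma norm_inv_sqrt_smul_sq {E : Type*} [NormedAddCommGroup E] [NormedSpace ℝ E] {a : ℝ}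
    (ha : 0 ≤ a) (w : E) : ‖(√a)⁻¹ • w‖ ^ 2 = ‖w‖ ^ 2 / a := by
  rw [norm_smul, mul_pow, norm_inv, Real.norm_eq_abs, abs_of_nonneg (Real.sqrt_nonneg a), inv_pow,
    Real.sq_sqrt ha, inv_mul_eq_div]

lemma hermiteN_inv_sqrt_smul_mul_exp {n : ℕ} (α : Fin n → ℕ) {a : ℝ} (ha : 0 ≤ a)
    (w : EuclideanSpace ℝ (Fin n)) :
    HermiteN α ((√a)⁻¹ • w) * Real.exp (-‖w‖ ^ 2 / a) = hermiteGaussN α ((√a)⁻¹ • w) := by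
  rw [hermiteGaussN, norm_inv_sqrt_smul_sq ha, neg_div]

/-- With
`F_α(x,y,r) = H_α((x-ry)/√(1-r²)) e^{-|x-ry|²/(1-r²)}`, there is `C > 0`
(depending on `α` and `n`) with
`|∇_y F_α(x,y,r)| ≤ C e^{-|x-ry|²/(2(1-r²))} / √(1-r²)`
for all `x, y ∈ ℝⁿ` and `r ∈ (0,1)`. -/
theorem gradient_F_alpha_bound {n : ℕ} (α : Fin n → ℕ) :
    ∃ C : ℝ, 0 < C ∧ ∀ (x y : EuclideanSpace ℝ (Fin n)), ∀ r ∈ Set.Ioo (0 : ℝ) 1,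
      ‖gradient (fun z : EuclideanSpace ℝ (Fin n) =>
          HermiteN α ((Real.sqrt (1 - r ^ 2))⁻¹ • (x - r • z)) *
            Real.exp (-‖x - r • z‖ ^ 2 / (1 - r ^ 2))) y‖
        ≤ C * Real.exp (-‖x - r • y‖ ^ 2 / (2 * (1 - r ^ 2))) / Real.sqrt (1 - r ^ 2) := by
  obtain ⟨C, hC⟩ := exists_norm_fderiv_hermiteGaussN_le α
  refine ⟨max C 1, by positivity, fun x y r ⟨hr0, hr1⟩ => ?_⟩
  have hr2 : 0 < 1 - r ^ 2 := by nlinarith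
  simp_rw [hermiteN_inv_sqrt_smul_mul_exp α hr2.le]
  set s := Real.sqrt (1 - r ^ 2)
  have hs : 0 < s := Real.sqrt_pos.2 hr2
  have hexp : Real.exp (-‖s⁻¹ • (x - r • y)‖ ^ 2 / 2) =
      Real.exp (-‖x - r • y‖ ^ 2 / (2 * (1 - r ^ 2))) := by
    rw [norm_inv_sqrt_smul_sq hr2.le, neg_div, neg_div, div_div, mul_comm (1 - r ^ 2)]
  rw [norm_gradient_comp_smul_sub (differentiable_hermiteGaussN α _), ← hexp,
    abs_of_pos (mul_pos (inv_pos.2 hs) hr0), div_eq_inv_mul, mul_assoc]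
  refine mul_le_mul_of_nonneg_left ?_ (inv_pos.2 hs).le
  calc r * ‖fderiv ℝ (hermiteGaussN α) (s⁻¹ • (x - r • y))‖
      ≤ 1 * (C * Real.exp (-‖s⁻¹ • (x - r • y)‖ ^ 2 / 2)) :=
        mul_le_mul hr1.le (hC _) (norm_nonneg _) zero_le_one
    _ ≤ max C 1 * Real.exp (-‖s⁻¹ • (x - r • y)‖ ^ 2 / 2) := by
        rw [one_mul]
        gcongr
        exact le_max_left _ _
end

section
/- If a ∈ L²(γ) is supported in an admissible ball B with ‖a‖_{L²(γ)} ≤ γ(B)^{-1/2}, and w(x) = 1 + |x|^{k-2} for k ≥ 3, then ‖a‖_{L¹(wγ)} ≤ 1 + 2^{k-2}. -/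
open MeasureTheory
open scoped ENNReal

/-!
By Cauchy–Schwarz on `B`, `‖a‖_{L¹(γ)} ≤ ‖a‖_{L²(γ)} γ(B)^{1/2} ≤ r^{k-2}`. On an admissible
ball `|x| ≤ 2/r`, so the weight is at most `1 + (2/r)^{k-2}` on the support of `a`, and
`(1 + (2/r)^{k-2}) r^{k-2} = r^{k-2} + 2^{k-2} ≤ 1 + 2^{k-2}` since `r ≤ 1`.
-/

lemma le_one_and_mul_le_one_of_le_ite_inv {t r : ℝ} (ht : 0 ≤ t)
    (h : r ≤ if t ≤ 1 then 1 else t⁻¹) : r ≤ 1 ∧ t * r ≤ 1 := by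
  split_ifs at h with ht1
  · exact ⟨h, by nlinarith⟩
  · have htr : t * r ≤ 1 := by
      calc t * r ≤ t * t⁻¹ := by gcongr
        _ = 1 := mul_inv_cancel₀ (by linarith)
    exact ⟨by nlinarith, htr⟩

lemma norm_le_two_div_of_mem_ball {E : Type*} [SeminormedAddCommGroup E] {c x : E} {r : ℝ}
    (hr : 0 < r) (hr1 : r ≤ 1) (hcr : ‖c‖ * r ≤ 1) (hx : x ∈ Metric.ball c r) :
    ‖x‖ ≤ 2 / r := by
  have hxc : ‖x‖ < ‖c‖ + r := by
    calc ‖x‖ ≤ ‖x - c‖ + ‖c‖ := norm_le_norm_sub_add x c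
      _ < r + ‖c‖ := by gcongr; rwa [← dist_eq_norm]
      _ = ‖c‖ + r := add_comm _ _
  rw [le_div_iff₀ hr]
  nlinarith

section SupportedFunctions

variable {α E : Type*} [MeasurableSpace α] [NormedAddCommGroup E] {μ : Measure α}
  {f : α → E} {s : Set α}

lemma eLpNorm_le_eLpNorm_mul_measure_rpow_of_support_subset {p q : ℝ≥0∞} (hpq : p ≤ q)
    (hf : AEStronglyMeasurable f μ) (hsupp : Function.support f ⊆ s) :
    eLpNorm f p μ ≤ eLpNorm f q μ * μ s ^ (1 / p.toReal - 1 / q.toReal) := by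
  have h := eLpNorm_le_eLpNorm_mul_rpow_measure_univ hpq hf.restrict (μ := μ.restrict s)
  rwa [eLpNorm_restrict_eq_of_support_subset hsupp, eLpNorm_restrict_eq_of_support_subset hsupp,
    Measure.restrict_apply_univ] at h

/-- `x ^ (-1/2) * x ^ (1/2) ≤ 1` holds in `ℝ≥0∞` for every `x`, including the junk cases
`x = 0` and `x = ∞`. -/
lemma eLpNorm_one_le_of_eLpNorm_two_le {C : ℝ≥0∞} (hf : AEStronglyMeasurable f μ)
    (hsupp : Function.support f ⊆ s) (h2 : eLpNorm f 2 μ ≤ C * μ s ^ (-(1 : ℝ) / 2)) :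
    eLpNorm f 1 μ ≤ C := by
  calc eLpNorm f 1 μ ≤ eLpNorm f 2 μ * μ s ^ (1 / 2 : ℝ) := by
        convert eLpNorm_le_eLpNorm_mul_measure_rpow_of_support_subset
          (p := 1) (q := 2) one_le_two hf hsupp using 2
        norm_num
    _ ≤ C * μ s ^ (-(1 : ℝ) / 2) * μ s ^ (1 / 2 : ℝ) := by gcongr
    _ ≤ C := by
        rw [mul_assoc, neg_div, ENNReal.rpow_neg]
        exact mul_le_of_le_one_right' (ENNReal.inv_mul_le_one _)

lemma integral_abs_mul_le_of_eLpNorm_one_le {a w : α → ℝ} {M A : ℝ} (hM : 0 ≤ M) (hA : 0 ≤ A)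
    (ha : AEStronglyMeasurable a μ) (hsupp : Function.support a ⊆ s)
    (hw0 : ∀ x, 0 ≤ w x) (hwM : ∀ x ∈ s, w x ≤ M) (hL1 : eLpNorm a 1 μ ≤ ENNReal.ofReal A) :
    ∫ x, |a x| * w x ∂μ ≤ M * A := by
  have hint : Integrable a μ :=
    memLp_one_iff_integrable.1 ⟨ha, hL1.trans_lt ENNReal.ofReal_lt_top⟩
  have hpointwise : ∀ x, |a x| * w x ≤ M * |a x| := fun x => by
    by_cases hx : a x = 0
    · simp [hx]
    · rw [mul_comm]; gcongr; exact hwM x (hsupp hx)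
  have habs : ∫ x, |a x| ∂μ ≤ A := by
    simp_rw [← Real.norm_eq_abs]
    rw [integral_norm_eq_lintegral_enorm ha, ← eLpNorm_one_eq_lintegral_enorm]
    exact ENNReal.toReal_le_of_le_ofReal hA hL1
  calc ∫ x, |a x| * w x ∂μ ≤ ∫ x, M * |a x| ∂μ :=
        integral_mono_of_nonneg (ae_of_all _ fun x => mul_nonneg (abs_nonneg _) (hw0 x))
          (hint.abs.const_mul M) (ae_of_all _ hpointwise)
    _ = M * ∫ x, |a x| ∂μ := integral_const_mul M _
    _ ≤ M * A := by gcongr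

end SupportedFunctions

theorem atom_weighted_L1_bound_general {n : ℕ} (k : ℕ)
    (c : EuclideanSpace ℝ (Fin n)) (r : ℝ) (hr : 0 < r)
    (hadm : r ≤ (if ‖c‖ ≤ 1 then 1 else ‖c‖⁻¹))
    (a : EuclideanSpace ℝ (Fin n) → ℝ)
    (ha : MemLp a 2 (gaussianMeasure n))
    (hsupp : Function.support a ⊆ Metric.ball c r)
    (hnorm : eLpNorm a 2 (gaussianMeasure n)
      ≤ ENNReal.ofReal (r ^ (k - 2)) *
          (gaussianMeasure n (Metric.ball c r)) ^ (-(1 : ℝ) / 2)) :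
    (∫ x, |a x| * (1 + ‖x‖ ^ (k - 2)) ∂(gaussianMeasure n)) ≤ 1 + 2 ^ (k - 2) := by
  obtain ⟨hr1, hcr⟩ := le_one_and_mul_le_one_of_le_ite_inv (norm_nonneg c) hadm
  have hweight : ∀ x ∈ Metric.ball c r, 1 + ‖x‖ ^ (k - 2) ≤ 1 + (2 / r) ^ (k - 2) :=
    fun x hx => by gcongr; exact norm_le_two_div_of_mem_ball hr hr1 hcr hx
  calc ∫ x, |a x| * (1 + ‖x‖ ^ (k - 2)) ∂(gaussianMeasure n)
      ≤ (1 + (2 / r) ^ (k - 2)) * r ^ (k - 2) :=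
        integral_abs_mul_le_of_eLpNorm_one_le (by positivity) (by positivity) ha.1 hsupp
          (fun x => by positivity) hweight (eLpNorm_one_le_of_eLpNorm_two_le ha.1 hsupp hnorm)
    _ = r ^ (k - 2) + 2 ^ (k - 2) := by
        rw [add_mul, one_mul, ← mul_pow, div_mul_cancel₀ _ hr.ne']
    _ ≤ 1 + 2 ^ (k - 2) := by gcongr; exact pow_le_one₀ hr.le hr1

/-- If `a ∈ L²(γ)` is supported in an admissible ball `B = B(c,r)`
with the atom norm bound `‖a‖_{L²(γ)} ≤ r^{k-2} γ(B)^{-1/2}` (weight factor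
`ω_k(r) = r^{k-2}`), and `w(x) = 1 + |x|^{k-2}` for `k ≥ 3`, then
`‖a‖_{L¹(wγ)} = ∫ |a| w dγ ≤ 1 + 2^{k-2}`. -/
theorem atom_weighted_L1_bound {n : ℕ} (k : ℕ) (hk : 3 ≤ k)
    (c : EuclideanSpace ℝ (Fin n)) (r : ℝ) (hr : 0 < r)
    (hadm : r ≤ (if ‖c‖ ≤ 1 then 1 else ‖c‖⁻¹))
    (a : EuclideanSpace ℝ (Fin n) → ℝ)
    (ha : MemLp a 2 (gaussianMeasure n))
    (hsupp : Function.support a ⊆ Metric.ball c r)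
    (hnorm : eLpNorm a 2 (gaussianMeasure n)
      ≤ ENNReal.ofReal (r ^ (k - 2)) *
          (gaussianMeasure n (Metric.ball c r)) ^ (-(1 : ℝ) / 2)) :
    (∫ x, |a x| * (1 + ‖x‖ ^ (k - 2)) ∂(gaussianMeasure n)) ≤ 1 + 2 ^ (k - 2) :=
  atom_weighted_L1_bound_general k c r hr hadm a ha hsupp hnorm
end
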